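/- arXiv:1511.01775 — 3 statements merged into one kernel-verified Lean document; each statement's English description precedes it below -/
import Mathlib

section
/- Let A = k[h^{±1}](σ, h^d − 1) with σ(h) = qh, q^d ≠ 1. The assignment φ(x) = u, φ(y) = (v^d − 1)u^{-1}, φ(h) = v defines an injective k-algebra homomorphism from A into the quantum torus T_q = k⟨u^{±1}, v^{±1} : uv = qvu⟩. -/
/-
The images `v, v⁻¹, u, (v^d - 1)u⁻¹` satisfy the defining relations of `A`, which gives `φ`.
The monomials `h^m x^n` (`n ≥ 0`) and `h^m y^(-n)` (`n < 0`) span `A`, so it suffices that their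
images are linearly independent. For this let `T_q` act on `⊕_{a ∈ ℤ} k[T^{±1}]`: `u` moves
column `a` to column `a + 1` while substituting `T ↦ qT`, and `v` multiplies by `T`. On the
vector `1` in column `0`, `h^m x^n` gives `T^m` in column `n`, and `h^m y^(-n)` gives `T^m f_n`
in column `n`, where `f_n` is obtained from `1` by iterating `f ↦ (T^d - 1) f(q⁻¹T)`, an
injective map since `T^d ≠ 1`. As `k[T^{±1}]` is a domain, these vectors are independent.
-/

/-- Relations defining the generalized Weyl algebra `k[h^{±1}](σ, h^d − 1)` with
`σ(h) = qh`: generators `h = ι 0`, `h⁻¹ = ι 1`, `x = ι 2`, `y = ι 3`. -/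
inductive GWARel (k : Type*) [Field k] (q : k) (d : ℕ) :
    FreeAlgebra k (Fin 4) → FreeAlgebra k (Fin 4) → Prop
  | hh : GWARel k q d (FreeAlgebra.ι k 0 * FreeAlgebra.ι k 1) 1
  | hh' : GWARel k q d (FreeAlgebra.ι k 1 * FreeAlgebra.ι k 0) 1
  | xh : GWARel k q d (FreeAlgebra.ι k 2 * FreeAlgebra.ι k 0)
      (q • (FreeAlgebra.ι k 0 * FreeAlgebra.ι k 2))
  | yh : GWARel k q d (FreeAlgebra.ι k 3 * FreeAlgebra.ι k 0)
      (q⁻¹ • (FreeAlgebra.ι k 0 * FreeAlgebra.ι k 3))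
  | xy : GWARel k q d (FreeAlgebra.ι k 2 * FreeAlgebra.ι k 3)
      (q ^ d • FreeAlgebra.ι k 0 ^ d - 1)
  | yx : GWARel k q d (FreeAlgebra.ι k 3 * FreeAlgebra.ι k 2)
      (FreeAlgebra.ι k 0 ^ d - 1)

/-- The generalized Weyl algebra `A(d,q) = k[h^{±1}](σ, h^d − 1)`. -/
abbrev GWA (k : Type*) [Field k] (q : k) (d : ℕ) := RingQuot (GWARel k q d)

variable (k : Type*) [Field k] (q : k) (d : ℕ)

noncomputable def hGen : GWA k q d := RingQuot.mkAlgHom k (GWARel k q d) (FreeAlgebra.ι k 0)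
noncomputable def hInv : GWA k q d := RingQuot.mkAlgHom k (GWARel k q d) (FreeAlgebra.ι k 1)
noncomputable def xGen : GWA k q d := RingQuot.mkAlgHom k (GWARel k q d) (FreeAlgebra.ι k 2)
noncomputable def yGen : GWA k q d := RingQuot.mkAlgHom k (GWARel k q d) (FreeAlgebra.ι k 3)

/-- `h^m` for an integer `m`, via `h` and `h⁻¹`. -/
noncomputable def hZPow (m : ℤ) : GWA k q d :=
  if 0 ≤ m then hGen k q d ^ m.toNat else hInv k q d ^ (-m).toNat

/-- Relations defining the quantum torus `T_q = k⟨u^{±1}, v^{±1}⟩` with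
`uv = q vu`: generators `u = ι 0`, `u⁻¹ = ι 1`, `v = ι 2`, `v⁻¹ = ι 3`. -/
inductive TorusRel (k : Type*) [Field k] (q : k) :
    FreeAlgebra k (Fin 4) → FreeAlgebra k (Fin 4) → Prop
  | uu : TorusRel k q (FreeAlgebra.ι k 0 * FreeAlgebra.ι k 1) 1
  | uu' : TorusRel k q (FreeAlgebra.ι k 1 * FreeAlgebra.ι k 0) 1
  | vv : TorusRel k q (FreeAlgebra.ι k 2 * FreeAlgebra.ι k 3) 1
  | vv' : TorusRel k q (FreeAlgebra.ι k 3 * FreeAlgebra.ι k 2) 1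
  | uv : TorusRel k q (FreeAlgebra.ι k 0 * FreeAlgebra.ι k 2)
      (q • (FreeAlgebra.ι k 2 * FreeAlgebra.ι k 0))

/-- The quantum torus. -/
abbrev QTorus (k : Type*) [Field k] (q : k) := RingQuot (TorusRel k q)

variable (k : Type*) [Field k] (q : k)

noncomputable def uGen : QTorus k q := RingQuot.mkAlgHom k (TorusRel k q) (FreeAlgebra.ι k 0)
noncomputable def uInv : QTorus k q := RingQuot.mkAlgHom k (TorusRel k q) (FreeAlgebra.ι k 1)
noncomputable def vGen : QTorus k q := RingQuot.mkAlgHom k (TorusRel k q) (FreeAlgebra.ι k 2)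
noncomputable def vInv : QTorus k q := RingQuot.mkAlgHom k (TorusRel k q) (FreeAlgebra.ι k 3)

/-- `u^r` for an integer `r`. -/
noncomputable def uZPow (r : ℤ) : QTorus k q :=
  if 0 ≤ r then uGen k q ^ r.toNat else uInv k q ^ (-r).toNat

/-- `v^m` for an integer `m`. -/
noncomputable def vZPow (m : ℤ) : QTorus k q :=
  if 0 ≤ m then vGen k q ^ m.toNat else vInv k q ^ (-m).toNat

def QCommute {R A : Type*} [CommSemiring R] [Semiring A] [Algebra R A] (c : R) (a b : A) : Prop :=
  a * b = c • (b * a)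

namespace QCommute

section Semiring

variable {R A : Type*} [CommSemiring R] [Semiring A] [Algebra R A] {c : R} {a b : A}

theorem pow_right (h : QCommute c a b) (n : ℕ) : QCommute (c ^ n) a (b ^ n) := by
  induction n with
  | zero => simp [QCommute]
  | succ n ih =>
    unfold QCommute at *
    rw [pow_succ, ← mul_assoc, ih, smul_mul_assoc, mul_assoc, h, mul_smul_comm, smul_smul,
      ← mul_assoc, ← pow_succ, ← pow_succ]

end Semiring

section Field

variable {k A : Type*} [Field k] [Ring A] [Algebra k A] {c : k}

theorem units_inv_left {a : Aˣ} {b : A} (hc : c ≠ 0) (h : QCommute c (a : A) b) :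
    QCommute c⁻¹ (↑a⁻¹ : A) b := by
  have : b * ↑a⁻¹ = c • (↑a⁻¹ * b) := by
    calc b * ↑a⁻¹ = ↑a⁻¹ * (↑a * b) * ↑a⁻¹ := by simp
      _ = c • (↑a⁻¹ * b) := by rw [h, mul_smul_comm, smul_mul_assoc]; simp [mul_assoc]
  rw [QCommute, this, smul_smul, inv_mul_cancel₀ hc, one_smul]

theorem units_inv_right {a : A} {b : Aˣ} (hc : c ≠ 0) (h : QCommute c a (b : A)) :
    QCommute c⁻¹ a (↑b⁻¹ : A) := by
  have : ↑b⁻¹ * a = c • (a * ↑b⁻¹) := by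
    calc ↑b⁻¹ * a = ↑b⁻¹ * (a * ↑b) * ↑b⁻¹ := by simp [mul_assoc]
      _ = c • (a * ↑b⁻¹) := by rw [h, mul_smul_comm, smul_mul_assoc]; simp [← mul_assoc]
  rw [QCommute, this, smul_smul, inv_mul_cancel₀ hc, one_smul]

theorem units_zpow_right {a : A} {b : Aˣ} (hc : c ≠ 0) (h : QCommute c a (b : A)) (m : ℤ) :
    QCommute (c ^ m) a ↑(b ^ m) := by
  induction m using Int.induction_on with
  | zero => simp [QCommute]
  | succ n ih =>
    unfold QCommute at *
    rw [zpow_add_one, Units.val_mul, ← mul_assoc, ih, smul_mul_assoc, mul_assoc, h,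
      mul_smul_comm, smul_smul, ← mul_assoc, zpow_add_one₀ hc]
  | pred n ih =>
    have h' := units_inv_right hc h
    unfold QCommute at *
    rw [zpow_sub_one, Units.val_mul, ← mul_assoc, ih, smul_mul_assoc, mul_assoc, h',
      mul_smul_comm, smul_smul, ← mul_assoc, zpow_sub_one₀ hc]

end Field

end QCommute

theorem Submodule.mul_mem_span_range {R A ι : Type*} [CommSemiring R] [Semiring A] [Algebra R A]
    {v : ι → A} {a : A} (h : ∀ i, a * v i ∈ span R (Set.range v)) {m : A}
    (hm : m ∈ span R (Set.range v)) : a * m ∈ span R (Set.range v) := by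
  have hle : span R (Set.range v) ≤ (span R (Set.range v)).comap (LinearMap.mulLeft R a) :=
    span_le.mpr (Set.range_subset_iff.mpr h)
  exact hle hm

theorem RingQuot.submodule_eq_top_of_ι_mul_mem {R X : Type*} [CommSemiring R]
    {r : FreeAlgebra R X → FreeAlgebra R X → Prop} (M : Submodule R (RingQuot r)) (h1 : 1 ∈ M)
    (hι : ∀ i, ∀ m ∈ M, mkAlgHom R r (FreeAlgebra.ι R i) * m ∈ M) : M = ⊤ := by
  refine Submodule.eq_top_iff'.mpr fun a => ?_
  obtain ⟨b, rfl⟩ := mkAlgHom_surjective R r a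
  suffices ∀ m ∈ M, mkAlgHom R r b * m ∈ M by simpa using this 1 h1
  induction b using FreeAlgebra.induction with
  | grade0 c => simpa [Algebra.algebraMap_eq_smul_one] using fun m hm => M.smul_mem c hm
  | grade1 i => exact hι i
  | mul a b iha ihb => exact fun m hm => by simpa [mul_assoc] using iha _ (ihb m hm)
  | add a b iha ihb => exact fun m hm => by simpa [add_mul] using M.add_mem (iha m hm) (ihb m hm)

namespace LaurentPolynomial

section CommSemiring

variable {R : Type*} [CommSemiring R]

noncomputable def rescaleHom (c : Rˣ) : Multiplicative ℤ →* R[T;T⁻¹] where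
  toFun n := C (↑(c ^ n.toAdd) : R) * T n.toAdd
  map_one' := by simp
  map_mul' a b := by
    simp only [toAdd_mul, zpow_add, Units.val_mul, map_mul, T_add]
    ring

/-- The substitution `T ↦ c T`. -/
noncomputable def rescale (c : Rˣ) : R[T;T⁻¹] →ₐ[R] R[T;T⁻¹] :=
  AddMonoidAlgebra.lift R _ ℤ (rescaleHom c)

theorem rescale_T (c : Rˣ) (n : ℤ) : rescale c (T n) = C (↑(c ^ n) : R) * T n := by
  rw [rescale, T, AddMonoidAlgebra.lift_single, one_smul]
  rfl

theorem rescale_C (c : Rˣ) (r : R) : rescale c (C r) = C r := by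
  rw [C_eq_algebraMap, AlgHom.commutes]

theorem rescale_T_mul (c : Rˣ) (n : ℤ) (f : R[T;T⁻¹]) :
    rescale c (T n * f) = C (↑(c ^ n) : R) * (T n * rescale c f) := by
  rw [map_mul, rescale_T, mul_assoc]

theorem rescale_rescale (c c' : Rˣ) (f : R[T;T⁻¹]) :
    rescale c (rescale c' f) = rescale (c * c') f := by
  suffices (rescale c).comp (rescale c') = rescale (c * c') from DFunLike.congr_fun this f
  refine AddMonoidAlgebra.algHom_ext (M := ℤ) (fun n => ?_) (Subsingleton.elim _ _)
  simp only [AlgHom.comp_apply, ← T.eq_1, rescale_T, map_mul, rescale_C, mul_zpow, Units.val_mul]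
  ring

theorem rescale_one (f : R[T;T⁻¹]) : rescale 1 f = f := by
  suffices rescale (1 : Rˣ) = AlgHom.id R _ from DFunLike.congr_fun this f
  refine AddMonoidAlgebra.algHom_ext (M := ℤ) (fun n => ?_) (Subsingleton.elim _ _)
  simp [rescale_T]

theorem rescale_rescale_inv (c : Rˣ) (f : R[T;T⁻¹]) : rescale c (rescale c⁻¹ f) = f := by
  rw [rescale_rescale, mul_inv_cancel, rescale_one]

theorem rescale_inv_rescale (c : Rˣ) (f : R[T;T⁻¹]) : rescale c⁻¹ (rescale c f) = f := by
  rw [rescale_rescale, inv_mul_cancel, rescale_one]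

theorem rescale_injective (c : Rˣ) : Function.Injective (rescale c) :=
  Function.LeftInverse.injective (rescale_inv_rescale c)

theorem mulLeft_T_mul_mulLeft_T (m n : ℤ) :
    LinearMap.mulLeft R (T m : R[T;T⁻¹]) * LinearMap.mulLeft R (T n) =
      LinearMap.mulLeft R (T (m + n)) := by
  rw [T_add, LinearMap.mulLeft_mul]
  rfl

end CommSemiring

section Field

variable {K : Type*} [Field K]

theorem T_sub_one_ne_zero {n : ℤ} (hn : n ≠ 0) : (T n - 1 : K[T;T⁻¹]) ≠ 0 := by
  rw [sub_ne_zero, ← T_zero]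
  exact fun h => hn (AddMonoidAlgebra.single_left_injective one_ne_zero h)

theorem injective_mulLeft_mul_rescale {f : K[T;T⁻¹]} (hf : f ≠ 0) (c : Kˣ) :
    Function.Injective (LinearMap.mulLeft K f * (rescale c).toLinearMap) :=
  (mul_right_injective₀ hf).comp (rescale_injective c)

theorem linearIndependent_single_T_mul {ι : Type*} {G : ι → K[T;T⁻¹]} (hG : ∀ i, G i ≠ 0) :
    LinearIndependent K fun p : ℤ × ι => Finsupp.single p.2 (T p.1 * G p.2) := by
  have hT : LinearIndependent K fun m : ℤ => (T m : K[T;T⁻¹]) := by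
    convert (AddMonoidAlgebra.basis ℤ K).linearIndependent using 1
    exact funext fun m => (AddMonoidAlgebra.basis_apply K m).symm
  have column (i : ι) : LinearIndependent K fun m : ℤ => T m * G i :=
    hT.map' (LinearMap.mulRight K (G i)) (LinearMap.ker_eq_bot.mpr (mul_left_injective₀ (hG i)))
  have hswap : Function.Injective fun p : ℤ × ι => (⟨p.2, p.1⟩ : Σ _ : ι, ℤ) :=
    fun ⟨m, i⟩ ⟨m', i'⟩ h => by
      simp only [Sigma.mk.inj_iff, heq_eq_eq] at h
      rw [h.1, h.2]
  simpa only [Function.comp_def] using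
    (Finsupp.linearIndependent_single (φ := fun _ : ι => ℤ) _ column).comp _ hswap

end Field

end LaurentPolynomial

namespace Finsupp

variable {R M G : Type*} [CommRing R] [AddCommGroup M] [Module R M] [AddMonoid G]

noncomputable def shiftMap (s : G) (g : Module.End R M) : Module.End R (G →₀ M) :=
  lsum R fun a => lsingle (a + s) ∘ₗ g

@[simp] theorem shiftMap_single (s : G) (g : Module.End R M) (a : G) (f : M) :
    shiftMap s g (single a f) = single (a + s) (g f) := by
  simp [shiftMap]

theorem shiftMap_mul (s s' : G) (g g' : Module.End R M) :
    shiftMap s g * shiftMap s' g' = shiftMap (s' + s) (g * g') :=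
  lhom_ext fun a f => by simp [add_assoc]

theorem shiftMap_zero_one : shiftMap (0 : G) (1 : Module.End R M) = 1 :=
  lhom_ext fun a f => by simp

theorem shiftMap_pow (s : G) (g : Module.End R M) (n : ℕ) :
    shiftMap s g ^ n = shiftMap (n • s) (g ^ n) := by
  induction n with
  | zero => simp [shiftMap_zero_one]
  | succ n ih => rw [pow_succ, ih, shiftMap_mul, ← succ_nsmul', pow_succ]

theorem smul_shiftMap (c : R) (s : G) (g : Module.End R M) :
    c • shiftMap s g = shiftMap s (c • g) :=
  lhom_ext fun a f => by simp

theorem shiftMap_sub (s : G) (g g' : Module.End R M) :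
    shiftMap s g - shiftMap s g' = shiftMap s (g - g') :=
  lhom_ext fun a f => by simp

end Finsupp

namespace QTorus

open LaurentPolynomial Finsupp

variable {k : Type*} [Field k] {q : k}

theorem uGen_mul_uInv : uGen k q * uInv k q = 1 := by
  simpa [uGen, uInv] using RingQuot.mkAlgHom_rel k (TorusRel.uu (q := q))

theorem uInv_mul_uGen : uInv k q * uGen k q = 1 := by
  simpa [uGen, uInv] using RingQuot.mkAlgHom_rel k (TorusRel.uu' (q := q))

theorem vGen_mul_vInv : vGen k q * vInv k q = 1 := by
  simpa [vGen, vInv] using RingQuot.mkAlgHom_rel k (TorusRel.vv (q := q))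

theorem vInv_mul_vGen : vInv k q * vGen k q = 1 := by
  simpa [vGen, vInv] using RingQuot.mkAlgHom_rel k (TorusRel.vv' (q := q))

theorem qCommute_uGen_vGen : QCommute q (uGen k q) (vGen k q) := by
  simpa [QCommute, uGen, vGen] using RingQuot.mkAlgHom_rel k (TorusRel.uv (q := q))

theorem uInv_mul_vGen (hq0 : q ≠ 0) : uInv k q * vGen k q = q⁻¹ • (vGen k q * uInv k q) :=
  QCommute.units_inv_left (a := ⟨uGen k q, uInv k q, uGen_mul_uInv, uInv_mul_uGen⟩) hq0
    qCommute_uGen_vGen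

theorem uGen_mul_vGen_pow (n : ℕ) : uGen k q * vGen k q ^ n = q ^ n • (vGen k q ^ n * uGen k q) :=
  qCommute_uGen_vGen.pow_right n

variable (k q) in
noncomputable def freeRep (hq0 : q ≠ 0) :
    FreeAlgebra k (Fin 4) →ₐ[k] Module.End k (ℤ →₀ k[T;T⁻¹]) :=
  FreeAlgebra.lift k
    ![shiftMap 1 (rescale (Units.mk0 q hq0)).toLinearMap,
      shiftMap (-1) (rescale (Units.mk0 q hq0)⁻¹).toLinearMap,
      shiftMap 0 (LinearMap.mulLeft k (T 1)), shiftMap 0 (LinearMap.mulLeft k (T (-1)))]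

theorem freeRep_rel (hq0 : q ≠ 0) ⦃a b : FreeAlgebra k (Fin 4)⦄ (h : TorusRel k q a b) :
    freeRep k q hq0 a = freeRep k q hq0 b := by
  have hu (c : kˣ) : (rescale c).toLinearMap * (rescale c⁻¹).toLinearMap = 1 :=
    LinearMap.ext (rescale_rescale_inv c)
  have hu' (c : kˣ) : (rescale c⁻¹).toLinearMap * (rescale c).toLinearMap = 1 :=
    LinearMap.ext (rescale_inv_rescale c)
  cases h with
  | uu => simp [freeRep, shiftMap_mul, hu, shiftMap_zero_one]
  | uu' => simp [freeRep, shiftMap_mul, hu', shiftMap_zero_one]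
  | vv => simp [freeRep, shiftMap_mul, mulLeft_T_mul_mulLeft_T, ← Module.End.one_eq_id,
      shiftMap_zero_one]
  | vv' => simp [freeRep, shiftMap_mul, mulLeft_T_mul_mulLeft_T, ← Module.End.one_eq_id,
      shiftMap_zero_one]
  | uv =>
    simp only [freeRep, map_mul, map_smul, FreeAlgebra.lift_ι_apply, Matrix.cons_val,
      shiftMap_mul, smul_shiftMap, zero_add, add_zero]
    congr 1
    refine LinearMap.ext fun f => ?_
    simp only [Module.End.mul_apply, LinearMap.smul_apply, LinearMap.mulLeft_apply,
      AlgHom.toLinearMap_apply, rescale_T_mul, zpow_one, Units.val_mk0, smul_eq_C_mul]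

variable (k q) in
noncomputable def torusRep (hq0 : q ≠ 0) : QTorus k q →ₐ[k] Module.End k (ℤ →₀ k[T;T⁻¹]) :=
  RingQuot.liftAlgHom k ⟨freeRep k q hq0, freeRep_rel hq0⟩

variable (hq0 : q ≠ 0)

@[simp] theorem torusRep_uGen :
    torusRep k q hq0 (uGen k q) = shiftMap 1 (rescale (Units.mk0 q hq0)).toLinearMap := by
  simp [torusRep, freeRep, uGen]

@[simp] theorem torusRep_uInv :
    torusRep k q hq0 (uInv k q) = shiftMap (-1) (rescale (Units.mk0 q hq0)⁻¹).toLinearMap := by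
  simp [torusRep, freeRep, uInv]

@[simp] theorem torusRep_vGen :
    torusRep k q hq0 (vGen k q) = shiftMap 0 (LinearMap.mulLeft k (T 1)) := by
  simp [torusRep, freeRep, vGen]

@[simp] theorem torusRep_vInv :
    torusRep k q hq0 (vInv k q) = shiftMap 0 (LinearMap.mulLeft k (T (-1))) := by
  simp [torusRep, freeRep, vInv]

end QTorus

namespace GWA

open LaurentPolynomial Finsupp QTorus

variable {k : Type*} [Field k] {q : k} {d : ℕ}

theorem hGen_mul_hInv : hGen k q d * hInv k q d = 1 := by
  simpa [hGen, hInv] using RingQuot.mkAlgHom_rel k (GWARel.hh (q := q) (d := d))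

theorem hInv_mul_hGen : hInv k q d * hGen k q d = 1 := by
  simpa [hGen, hInv] using RingQuot.mkAlgHom_rel k (GWARel.hh' (q := q) (d := d))

theorem qCommute_xGen_hGen : QCommute q (xGen k q d) (hGen k q d) := by
  simpa [QCommute, xGen, hGen] using RingQuot.mkAlgHom_rel k (GWARel.xh (q := q) (d := d))

theorem qCommute_yGen_hGen : QCommute q⁻¹ (yGen k q d) (hGen k q d) := by
  simpa [QCommute, yGen, hGen] using RingQuot.mkAlgHom_rel k (GWARel.yh (q := q) (d := d))

theorem xGen_mul_yGen : xGen k q d * yGen k q d = q ^ d • hGen k q d ^ d - 1 := by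
  simpa [xGen, yGen, hGen] using RingQuot.mkAlgHom_rel k (GWARel.xy (q := q) (d := d))

theorem yGen_mul_xGen : yGen k q d * xGen k q d = hGen k q d ^ d - 1 := by
  simpa [xGen, yGen, hGen] using RingQuot.mkAlgHom_rel k (GWARel.yx (q := q) (d := d))

section Monomials

variable (k q d)

noncomputable def hUnit : (GWA k q d)ˣ :=
  ⟨hGen k q d, hInv k q d, hGen_mul_hInv, hInv_mul_hGen⟩

noncomputable def xyPow : ℤ → GWA k q d
  | (t : ℕ) => xGen k q d ^ t
  | Int.negSucc t => yGen k q d ^ (t + 1)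

noncomputable def monomial (p : ℤ × ℤ) : GWA k q d :=
  ↑(hUnit k q d ^ p.1) * xyPow k q d p.2

variable {k q d}

theorem xyPow_neg_natCast : (t : ℕ) → xyPow k q d (-t) = yGen k q d ^ t
  | 0 => by simp [xyPow]
  | _ + 1 => rfl

theorem hUnit_zpow_mul_hGen_pow (m : ℤ) (n : ℕ) :
    ↑(hUnit k q d ^ m) * hGen k q d ^ n = ↑(hUnit k q d ^ (m + n)) := by
  rw [zpow_add, Units.val_mul, zpow_natCast, Units.val_pow_eq_pow_val]
  rfl

theorem hGen_mul_monomial (p : ℤ × ℤ) :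
    hGen k q d * monomial k q d p = monomial k q d (p.1 + 1, p.2) := by
  rw [monomial, monomial, ← mul_assoc, add_comm, zpow_add, zpow_one, Units.val_mul]
  rfl

theorem hInv_mul_monomial (p : ℤ × ℤ) :
    hInv k q d * monomial k q d p = monomial k q d (p.1 - 1, p.2) := by
  rw [monomial, monomial, ← mul_assoc, sub_eq_neg_add, zpow_add, zpow_neg_one, Units.val_mul]
  rfl

theorem xGen_mul_hUnit_zpow (hq0 : q ≠ 0) (m : ℤ) :
    xGen k q d * ↑(hUnit k q d ^ m) = q ^ m • (↑(hUnit k q d ^ m) * xGen k q d) :=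
  qCommute_xGen_hGen.units_zpow_right (b := hUnit k q d) hq0 m

theorem yGen_mul_hUnit_zpow (hq0 : q ≠ 0) (m : ℤ) :
    yGen k q d * ↑(hUnit k q d ^ m) = q⁻¹ ^ m • (↑(hUnit k q d ^ m) * yGen k q d) :=
  qCommute_yGen_hGen.units_zpow_right (b := hUnit k q d) (inv_ne_zero hq0) m

theorem xGen_mul_monomial_natCast (hq0 : q ≠ 0) (m : ℤ) (t : ℕ) :
    xGen k q d * monomial k q d (m, t) = q ^ m • monomial k q d (m, (t + 1 : ℕ)) := by
  simp only [monomial, xyPow]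
  rw [← mul_assoc, xGen_mul_hUnit_zpow hq0, smul_mul_assoc, mul_assoc, ← pow_succ']

theorem xGen_mul_monomial_negSucc (hq0 : q ≠ 0) (m : ℤ) (t : ℕ) :
    xGen k q d * monomial k q d (m, Int.negSucc t)
      = q ^ m • (q ^ d • monomial k q d (m + d, -t) - monomial k q d (m, -t)) := by
  simp only [monomial, xyPow_neg_natCast]
  simp only [xyPow]
  rw [← mul_assoc, xGen_mul_hUnit_zpow hq0, smul_mul_assoc, mul_assoc, pow_succ',
    ← mul_assoc (xGen k q d), xGen_mul_yGen, ← hUnit_zpow_mul_hGen_pow]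
  simp only [sub_mul, mul_sub, smul_mul_assoc, mul_smul_comm, one_mul, mul_assoc]

theorem yGen_mul_monomial_neg_natCast (hq0 : q ≠ 0) (m : ℤ) (t : ℕ) :
    yGen k q d * monomial k q d (m, -t) = q⁻¹ ^ m • monomial k q d (m, -(t + 1 : ℕ)) := by
  simp only [monomial, xyPow_neg_natCast]
  rw [← mul_assoc, yGen_mul_hUnit_zpow hq0, smul_mul_assoc, mul_assoc, ← pow_succ']

theorem yGen_mul_monomial_natCast_succ (hq0 : q ≠ 0) (m : ℤ) (t : ℕ) :
    yGen k q d * monomial k q d (m, (t + 1 : ℕ))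
      = q⁻¹ ^ m • (monomial k q d (m + d, t) - monomial k q d (m, t)) := by
  simp only [monomial, xyPow]
  rw [← mul_assoc, yGen_mul_hUnit_zpow hq0, smul_mul_assoc, mul_assoc, pow_succ',
    ← mul_assoc (yGen k q d), yGen_mul_xGen, ← hUnit_zpow_mul_hGen_pow]
  simp only [sub_mul, mul_sub, one_mul, mul_assoc]

theorem mul_monomial_mem_span (hq0 : q ≠ 0) (i : Fin 4) (p : ℤ × ℤ) :
    RingQuot.mkAlgHom k (GWARel k q d) (FreeAlgebra.ι k i) * monomial k q d p
      ∈ Submodule.span k (Set.range (monomial k q d)) := by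
  have mem (p : ℤ × ℤ) : monomial k q d p ∈ Submodule.span k (Set.range (monomial k q d)) :=
    Submodule.subset_span ⟨p, rfl⟩
  obtain ⟨m, n⟩ := p
  fin_cases i
  · show hGen k q d * _ ∈ _
    rw [hGen_mul_monomial]
    exact mem _
  · show hInv k q d * _ ∈ _
    rw [hInv_mul_monomial]
    exact mem _
  · show xGen k q d * _ ∈ _
    cases n with
    | ofNat t =>
      rw [Int.ofNat_eq_natCast, xGen_mul_monomial_natCast hq0]
      exact Submodule.smul_mem _ _ (mem _)
    | negSucc t =>
      rw [xGen_mul_monomial_negSucc hq0]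
      exact Submodule.smul_mem _ _ (Submodule.sub_mem _ (Submodule.smul_mem _ _ (mem _)) (mem _))
  · show yGen k q d * _ ∈ _
    obtain ⟨t, rfl⟩ | ⟨t, rfl⟩ : (∃ t : ℕ, n = (t + 1 : ℕ)) ∨ ∃ t : ℕ, n = -t := by
      rcases n with (_ | t) | t
      exacts [.inr ⟨0, rfl⟩, .inl ⟨t, rfl⟩, .inr ⟨t + 1, rfl⟩]
    · rw [yGen_mul_monomial_natCast_succ hq0]
      exact Submodule.smul_mem _ _ (Submodule.sub_mem _ (mem _) (mem _))
    · rw [yGen_mul_monomial_neg_natCast hq0]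
      exact Submodule.smul_mem _ _ (mem _)

theorem span_range_monomial (hq0 : q ≠ 0) :
    Submodule.span k (Set.range (monomial k q d)) = ⊤ := by
  refine RingQuot.submodule_eq_top_of_ι_mul_mem _ ?_ fun i m hm => ?_
  · have : monomial k q d (0, 0) = 1 := by simp [monomial, xyPow]
    exact this ▸ Submodule.subset_span ⟨_, rfl⟩
  · exact Submodule.mul_mem_span_range (mul_monomial_mem_span hq0 i) hm

end Monomials

variable (k q d) in
noncomputable def freeToQTorus : FreeAlgebra k (Fin 4) →ₐ[k] QTorus k q :=
  FreeAlgebra.lift k ![vGen k q, vInv k q, uGen k q, (vGen k q ^ d - 1) * uInv k q]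

theorem freeToQTorus_rel (hq0 : q ≠ 0) ⦃a b : FreeAlgebra k (Fin 4)⦄ (h : GWARel k q d a b) :
    freeToQTorus k q d a = freeToQTorus k q d b := by
  unfold freeToQTorus
  cases h with
  | hh => simp [vGen_mul_vInv]
  | hh' => simp [vInv_mul_vGen]
  | xh =>
    simp only [map_mul, map_smul, FreeAlgebra.lift_ι_apply, Matrix.cons_val]
    exact qCommute_uGen_vGen
  | yh =>
    simp only [map_mul, map_smul, FreeAlgebra.lift_ι_apply, Matrix.cons_val]
    rw [mul_assoc, uInv_mul_vGen hq0, mul_smul_comm, ← mul_assoc, ← mul_assoc, sub_mul, mul_sub,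
      one_mul, mul_one, ← pow_succ, ← pow_succ']
  | xy =>
    simp only [map_mul, map_smul, map_sub, map_pow, map_one, FreeAlgebra.lift_ι_apply,
      Matrix.cons_val]
    rw [← mul_assoc, mul_sub, mul_one, uGen_mul_vGen_pow, sub_mul, smul_mul_assoc, mul_assoc,
      uGen_mul_uInv, mul_one]
  | yx => simp [mul_assoc, uInv_mul_uGen]

variable (k q d) in
noncomputable def toQTorus (hq0 : q ≠ 0) : GWA k q d →ₐ[k] QTorus k q :=
  RingQuot.liftAlgHom k ⟨freeToQTorus k q d, freeToQTorus_rel hq0⟩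

variable (k q d) in
noncomputable def rep (hq0 : q ≠ 0) : GWA k q d →ₐ[k] Module.End k (ℤ →₀ k[T;T⁻¹]) :=
  (torusRep k q hq0).comp (toQTorus k q d hq0)

variable (hq0 : q ≠ 0)

@[simp] theorem toQTorus_hGen : toQTorus k q d hq0 (hGen k q d) = vGen k q := by
  simp [toQTorus, freeToQTorus, hGen]

@[simp] theorem toQTorus_hInv : toQTorus k q d hq0 (hInv k q d) = vInv k q := by
  simp [toQTorus, freeToQTorus, hInv]

@[simp] theorem toQTorus_xGen : toQTorus k q d hq0 (xGen k q d) = uGen k q := by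
  simp [toQTorus, freeToQTorus, xGen]

@[simp] theorem toQTorus_yGen :
    toQTorus k q d hq0 (yGen k q d) = (vGen k q ^ d - 1) * uInv k q := by
  simp [toQTorus, freeToQTorus, yGen]

theorem rep_hUnit_zpow (m : ℤ) :
    rep k q d hq0 ↑(hUnit k q d ^ m) = shiftMap 0 (LinearMap.mulLeft k (T m)) := by
  induction m using Int.induction_on with
  | zero => simp [← Module.End.one_eq_id, shiftMap_zero_one]
  | succ n ih =>
    rw [zpow_add_one, Units.val_mul, map_mul, ih]
    simp [rep, hUnit, shiftMap_mul, mulLeft_T_mul_mulLeft_T]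
  | pred n ih =>
    rw [zpow_sub_one, Units.val_mul, map_mul, ih]
    simp [rep, hUnit, shiftMap_mul, mulLeft_T_mul_mulLeft_T, sub_eq_add_neg]

theorem rep_xGen :
    rep k q d hq0 (xGen k q d) = shiftMap 1 (rescale (Units.mk0 q hq0)).toLinearMap := by
  simp [rep]

theorem rep_yGen : rep k q d hq0 (yGen k q d) = shiftMap (-1)
    (LinearMap.mulLeft k (T d - 1) * (rescale (Units.mk0 q hq0)⁻¹).toLinearMap) := by
  have : LinearMap.mulLeft k (T d) - 1 = LinearMap.mulLeft k (T d - 1 : k[T;T⁻¹]) :=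
    LinearMap.ext fun f => by simp [sub_mul]
  simp [rep, shiftMap_pow, ← shiftMap_zero_one, shiftMap_sub, shiftMap_mul, LinearMap.pow_mulLeft,
    this]

theorem rep_xyPow_single (hd : 1 ≤ d) (n : ℤ) :
    ∃ f ≠ 0, rep k q d hq0 (xyPow k q d n) (single 0 1) = single n f := by
  cases n with
  | ofNat t =>
    refine ⟨1, one_ne_zero, ?_⟩
    have : ((rescale (Units.mk0 q hq0)).toLinearMap ^ t) 1 = 1 := by
      rw [Module.End.pow_apply]
      exact Function.iterate_fixed (map_one (rescale (Units.mk0 q hq0))) t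
    simp [xyPow, rep_xGen, shiftMap_pow, this]
  | negSucc t =>
    set g := LinearMap.mulLeft k (T d - 1) * (rescale (Units.mk0 q hq0)⁻¹).toLinearMap
    have hg : Function.Injective ⇑(g ^ (t + 1)) := by
      rw [Module.End.coe_pow]
      exact (injective_mulLeft_mul_rescale (T_sub_one_ne_zero (by omega)) _).iterate _
    refine ⟨(g ^ (t + 1)) 1, fun h => one_ne_zero (hg (h.trans (map_zero _).symm)), ?_⟩
    simp only [xyPow, map_pow, rep_yGen, shiftMap_pow, shiftMap_single, g]
    congr 1
    simp only [nsmul_eq_mul, mul_neg, mul_one, zero_add]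
    omega

theorem rep_monomial_single {n : ℤ} {f : k[T;T⁻¹]}
    (hf : rep k q d hq0 (xyPow k q d n) (single 0 1) = single n f) (m : ℤ) :
    rep k q d hq0 (monomial k q d (m, n)) (single 0 1) = single n (T m * f) := by
  rw [monomial, map_mul, Module.End.mul_apply, hf, rep_hUnit_zpow, shiftMap_single, add_zero,
    LinearMap.mulLeft_apply]

theorem toQTorus_injective (hd : 1 ≤ d) : Function.Injective (toQTorus k q d hq0) := by
  choose G hG0 hG using rep_xyPow_single hq0 hd
  let L : GWA k q d →ₗ[k] ℤ →₀ k[T;T⁻¹] :=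
    LinearMap.applyₗ (single 0 1) ∘ₗ (rep k q d hq0).toLinearMap
  have hL : L ∘ monomial k q d = fun p => single p.2 (T p.1 * G p.2) :=
    funext fun p => rep_monomial_single hq0 (hG p.2) p.1
  have hinj : Function.Injective L := LinearMap.injective_of_linearIndependent
    (span_range_monomial hq0) (hL ▸ linearIndependent_single_T_mul hG0)
  exact Function.Injective.of_comp (f := fun a => torusRep k q hq0 a (single 0 1)) hinj

end GWA

theorem stmt9 (d : ℕ) (hd : 1 ≤ d) (hq0 : q ≠ 0) :
    ∃ φ : GWA k q d →ₐ[k] QTorus k q,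
      φ (hGen k q d) = vGen k q ∧
      φ (hInv k q d) = vInv k q ∧
      φ (xGen k q d) = uGen k q ∧
      φ (yGen k q d) = (vGen k q ^ d - 1) * uInv k q ∧
      Function.Injective φ :=
  ⟨GWA.toQTorus k q d hq0, GWA.toQTorus_hGen hq0, GWA.toQTorus_hInv hq0,
    GWA.toQTorus_xGen hq0, GWA.toQTorus_yGen hq0, GWA.toQTorus_injective hq0 hd⟩
end

section
/- Let k be a field and q a primitive t-th root of unity in k with t > 1, and let σ(h) = qh on k[h^{±1}], A = k[h^{±1}](σ, h^d − 1). The assignment ψ(h) = h^{t+1}, ψ(x) = U(h) x with U(h) = \sum_{l=0}^t q^{ld} h^{dl}, ψ(y) = y defines a k-algebra endomorphism of A that is not surjective (hence not an automorphism). -/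
variable (k : Type*) [Field k] (q : k) (d : ℕ)

open Finset

section Relations

variable {k} {B : Type*} [Ring B] [Algebra k B]

structure SatisfiesGWARel (H H' X Y : B) : Prop where
  mul_inv : H * H' = 1
  inv_mul : H' * H = 1
  x_mul_h : X * H = q • (H * X)
  y_mul_h : Y * H = q⁻¹ • (H * Y)
  x_mul_y : X * Y = q ^ d • H ^ d - 1
  y_mul_x : Y * X = H ^ d - 1

/-- The paper's `U(h)`. -/
def twistedGeomSum (t : ℕ) (H : B) : B :=
  ∑ l ∈ range (t + 1), q ^ (l * d) • H ^ (d * l)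

variable {q d}

theorem mul_pow_of_mul_eq_smul_mul {R A : Type*} [CommSemiring R] [Semiring A] [Algebra R A]
    {c : R} {a b : A} (h : a * b = c • (b * a)) (m : ℕ) :
    a * b ^ m = c ^ m • (b ^ m * a) := by
  induction m with
  | zero => simp
  | succ m ih =>
    rw [pow_succ, ← mul_assoc, ih, smul_mul_assoc, mul_assoc, h, mul_smul_comm, smul_smul,
      ← mul_assoc, pow_succ]

theorem twistedGeomSum_eq (t : ℕ) (H : B) :
    twistedGeomSum q d t H = ∑ l ∈ range (t + 1), (q ^ d • H ^ d) ^ l := by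
  simp only [twistedGeomSum, smul_pow, ← pow_mul, mul_comm d]

theorem AlgHom.map_twistedGeomSum {C : Type*} [Ring C] [Algebra k C] (f : B →ₐ[k] C) (t : ℕ)
    (H : B) : f (twistedGeomSum q d t H) = twistedGeomSum q d t (f H) := by
  simp [twistedGeomSum]

theorem commute_twistedGeomSum_pow (t m : ℕ) (H : B) :
    Commute (twistedGeomSum q d t H) (H ^ m) := by
  rw [twistedGeomSum_eq]
  exact Commute.sum_left _ _ _ fun l _ => ((Commute.pow_pow_self H d m).smul_left _).pow_left l

theorem twistedGeomSum_mul_skew {T D : B} (hDT : D * T = q • (T * D)) (t : ℕ) :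
    twistedGeomSum q d t T * (D * (T ^ d - 1)) = D * (T ^ (d * (t + 1)) - 1) := by
  have hUD : twistedGeomSum q d t T * D = D * ∑ l ∈ range (t + 1), (T ^ d) ^ l := by
    rw [twistedGeomSum, sum_mul, mul_sum]
    refine sum_congr rfl fun l _ => ?_
    rw [smul_mul_assoc, ← pow_mul, mul_pow_of_mul_eq_smul_mul hDT, mul_comm l d]
  rw [← mul_assoc, hUD, mul_assoc, geom_sum_mul, ← pow_mul]

theorem satisfiesGWARel_skew {T T' D D' : B} (hT : T * T' = 1) (hT' : T' * T = 1)
    (hD : D * D' = 1) (hD' : D' * D = 1) (hDT : D * T = q • (T * D)) (hq0 : q ≠ 0) :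
    SatisfiesGWARel q d T T' (D * (T ^ d - 1)) D' where
  mul_inv := hT
  inv_mul := hT'
  x_mul_h := by
    rw [mul_assoc, ← ((Commute.self_pow T d).sub_right (Commute.one_right T)).eq, ← mul_assoc,
      hDT, smul_mul_assoc, mul_assoc]
  y_mul_h := by
    have hTD : T * D = q⁻¹ • (D * T) := by rw [hDT, smul_smul, inv_mul_cancel₀ hq0, one_smul]
    calc D' * T = D' * (T * D) * D' := by rw [mul_assoc, mul_assoc, hD, mul_one]
      _ = q⁻¹ • (T * D') := by
        rw [hTD, mul_smul_comm, smul_mul_assoc, ← mul_assoc D', hD', one_mul]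
  x_mul_y := by
    rw [mul_sub, mul_one, sub_mul, mul_pow_of_mul_eq_smul_mul hDT, smul_mul_assoc, mul_assoc,
      hD, mul_one]
  y_mul_x := by rw [← mul_assoc, hD', one_mul]

namespace SatisfiesGWARel

variable {H H' X Y : B} (hR : SatisfiesGWARel q d H H' X Y)
include hR

theorem pow_mul_pow_inv (n : ℕ) : H ^ n * H' ^ n = 1 := by
  rw [← (show Commute H H' from hR.mul_inv.trans hR.inv_mul.symm).mul_pow, hR.mul_inv, one_pow]

theorem pow_inv_mul_pow (n : ℕ) : H' ^ n * H ^ n = 1 := by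
  rw [← (show Commute H' H from hR.inv_mul.trans hR.mul_inv.symm).mul_pow, hR.inv_mul, one_pow]

theorem y_mul_twistedGeomSum (hq0 : q ≠ 0) (t : ℕ) :
    Y * twistedGeomSum q d t H = (∑ l ∈ range (t + 1), (H ^ d) ^ l) * Y := by
  rw [twistedGeomSum, mul_sum, sum_mul]
  refine sum_congr rfl fun l _ => ?_
  rw [mul_smul_comm, mul_pow_of_mul_eq_smul_mul hR.y_mul_h, smul_smul, mul_comm l d, ← mul_pow,
    mul_inv_cancel₀ hq0, one_pow, one_smul, pow_mul]

theorem twist {t : ℕ} (hqt : q ^ t = 1) (hq0 : q ≠ 0) :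
    SatisfiesGWARel q d (H ^ (t + 1)) (H' ^ (t + 1)) (twistedGeomSum q d t H * X) Y where
  mul_inv := hR.pow_mul_pow_inv _
  inv_mul := hR.pow_inv_mul_pow _
  x_mul_h := by
    rw [mul_assoc, mul_pow_of_mul_eq_smul_mul hR.x_mul_h, pow_succ, hqt, one_mul, mul_smul_comm,
      ← mul_assoc, (commute_twistedGeomSum_pow t _ H).eq, mul_assoc]
  y_mul_h := by
    rw [mul_pow_of_mul_eq_smul_mul hR.y_mul_h, pow_succ, inv_pow, hqt, inv_one, one_mul]
  x_mul_y := by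
    have hqd : (q ^ d) ^ (t + 1) = q ^ d := by
      rw [pow_succ, ← pow_mul, mul_comm d t, pow_mul, hqt, one_pow, one_mul]
    rw [mul_assoc, hR.x_mul_y, twistedGeomSum_eq, geom_sum_mul, smul_pow, hqd, ← pow_mul,
      ← pow_mul, mul_comm]
  y_mul_x := by
    rw [← mul_assoc, hR.y_mul_twistedGeomSum hq0, mul_assoc, hR.y_mul_x, geom_sum_mul, ← pow_mul,
      ← pow_mul, mul_comm]

end SatisfiesGWARel

end Relations

namespace GWA

variable {k q d} {B : Type*} [Ring B] [Algebra k B]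

theorem satisfiesGWARel_gens :
    SatisfiesGWARel q d (hGen k q d) (hInv k q d) (xGen k q d) (yGen k q d) where
  mul_inv := by simpa [hGen, hInv] using RingQuot.mkAlgHom_rel k (GWARel.hh (q := q) (d := d))
  inv_mul := by simpa [hGen, hInv] using RingQuot.mkAlgHom_rel k (GWARel.hh' (q := q) (d := d))
  x_mul_h := by simpa [hGen, xGen] using RingQuot.mkAlgHom_rel k (GWARel.xh (q := q) (d := d))
  y_mul_h := by simpa [hGen, yGen] using RingQuot.mkAlgHom_rel k (GWARel.yh (q := q) (d := d))
  x_mul_y := by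
    simpa [hGen, xGen, yGen] using RingQuot.mkAlgHom_rel k (GWARel.xy (q := q) (d := d))
  y_mul_x := by
    simpa [hGen, xGen, yGen] using RingQuot.mkAlgHom_rel k (GWARel.yx (q := q) (d := d))

variable {H H' X Y : B}

noncomputable def lift (hR : SatisfiesGWARel q d H H' X Y) : GWA k q d →ₐ[k] B :=
  RingQuot.liftAlgHom k ⟨FreeAlgebra.lift k ![H, H', X, Y], fun _ _ r => by
    cases r <;> simp [hR.mul_inv, hR.inv_mul, hR.x_mul_h, hR.y_mul_h, hR.x_mul_y, hR.y_mul_x]⟩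

variable (hR : SatisfiesGWARel q d H H' X Y)

@[simp] theorem lift_hGen : lift hR (hGen k q d) = H := by simp [lift, hGen]
@[simp] theorem lift_hInv : lift hR (hInv k q d) = H' := by simp [lift, hInv]
@[simp] theorem lift_xGen : lift hR (xGen k q d) = X := by simp [lift, xGen]
@[simp] theorem lift_yGen : lift hR (yGen k q d) = Y := by simp [lift, yGen]

theorem algHom_mem_of_gens_mem (f : GWA k q d →ₐ[k] B) {S : Subalgebra k B}
    (hh : f (hGen k q d) ∈ S) (hh' : f (hInv k q d) ∈ S) (hx : f (xGen k q d) ∈ S)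
    (hy : f (yGen k q d) ∈ S) (a : GWA k q d) : f a ∈ S := by
  obtain ⟨a, rfl⟩ := RingQuot.mkAlgHom_surjective k (GWARel k q d) a
  induction a using FreeAlgebra.induction with
  | grade0 r => simpa only [AlgHom.commutes] using S.algebraMap_mem r
  | grade1 i => fin_cases i <;> assumption
  | mul a b ha hb => simpa only [map_mul] using mul_mem ha hb
  | add a b ha hb => simpa only [map_add] using add_mem ha hb

end GWA

section ShiftOperators

variable {R : Type*} [CommSemiring R]

def shiftOp (s : ℤ) : Module.End R (ℤ → R) := LinearMap.funLeft R R (· - s)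

@[simp] theorem shiftOp_apply (s : ℤ) (f : ℤ → R) (n : ℤ) : shiftOp s f n = f (n - s) := rfl

theorem shiftOp_mul_shiftOp (s r : ℤ) :
    shiftOp s * shiftOp r = (shiftOp (s + r) : Module.End R (ℤ → R)) :=
  LinearMap.ext fun f => funext fun n => by simp [sub_sub]

theorem shiftOp_zero : (shiftOp 0 : Module.End R (ℤ → R)) = 1 :=
  LinearMap.ext fun f => funext fun n => by simp

theorem shiftOp_pow (s : ℤ) (m : ℕ) : shiftOp s ^ m = (shiftOp (m * s) : Module.End R _) := by
  induction m with
  | zero => simp [shiftOp_zero]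
  | succ m ih => rw [pow_succ, ih, shiftOp_mul_shiftOp]; push_cast; ring_nf

theorem commute_shiftOp_mulLeft {s : ℤ} {w : ℤ → R} (hw : Function.Periodic w s) :
    Commute (shiftOp s) (LinearMap.mulLeft R w) :=
  LinearMap.ext fun f => funext fun n => by simp [hw.sub_eq n]

variable (R) in
def multiplesCentralizer (m : ℤ) : Subalgebra R (Module.End R (ℤ → R)) :=
  Subalgebra.centralizer R {LinearMap.mulLeft R fun n => if m ∣ n then 1 else 0}

theorem mulLeft_mem_multiplesCentralizer (m : ℤ) (w : ℤ → R) :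
    LinearMap.mulLeft R w ∈ multiplesCentralizer R m := by
  rw [multiplesCentralizer, Subalgebra.mem_centralizer_iff]
  rintro _ rfl
  exact LinearMap.ext fun f => funext fun n => by simp [mul_left_comm]

theorem shiftOp_mem_multiplesCentralizer {m s : ℤ} (hs : m ∣ s) :
    shiftOp s ∈ multiplesCentralizer R m := by
  rw [multiplesCentralizer, Subalgebra.mem_centralizer_iff]
  rintro _ rfl
  exact (commute_shiftOp_mulLeft fun n => by simp only [dvd_add_left hs]).symm

theorem shiftOp_one_not_mem_multiplesCentralizer [Nontrivial R] {m : ℤ} (hm : ¬ m ∣ 1) :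
    shiftOp 1 ∉ multiplesCentralizer R m := by
  rw [multiplesCentralizer, Subalgebra.mem_centralizer_iff]
  intro h
  have := congr_fun (LinearMap.congr_fun (h _ rfl) 1) 1
  simp [hm] at this

end ShiftOperators

section ShiftRepresentation

variable {k q d}

theorem mulLeft_zpow_mul_shiftOp_one (hq0 : q ≠ 0) :
    LinearMap.mulLeft k (q ^ · : ℤ → k) * shiftOp 1 =
      q • (shiftOp 1 * LinearMap.mulLeft k (q ^ · : ℤ → k)) :=
  LinearMap.ext fun f => funext fun n => by simp [zpow_sub_one₀ hq0]; field_simp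

theorem mulLeft_zpow_mul_mulLeft_inv_zpow (c : k) (hc : c ≠ 0) :
    LinearMap.mulLeft k (c ^ · : ℤ → k) * LinearMap.mulLeft k (c⁻¹ ^ · : ℤ → k) = 1 :=
  LinearMap.ext fun f => funext fun n => by simp [← mul_assoc, mul_inv_cancel₀ (zpow_ne_zero n hc)]

noncomputable def GWA.shiftRep (hq0 : q ≠ 0) : GWA k q d →ₐ[k] Module.End k (ℤ → k) :=
  GWA.lift (satisfiesGWARel_skew
    (by rw [shiftOp_mul_shiftOp, add_neg_cancel, shiftOp_zero])
    (by rw [shiftOp_mul_shiftOp, neg_add_cancel, shiftOp_zero])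
    (mulLeft_zpow_mul_mulLeft_inv_zpow q hq0)
    (by simpa using mulLeft_zpow_mul_mulLeft_inv_zpow q⁻¹ (inv_ne_zero hq0))
    (mulLeft_zpow_mul_shiftOp_one hq0) hq0)

end ShiftRepresentation

section NotSurjective

variable {k q d}

theorem GWA.lift_twist_not_surjective {t : ℕ} (ht : 0 < t) (hqt : q ^ t = 1) (hq0 : q ≠ 0) :
    ¬ Function.Surjective
      (GWA.lift ((GWA.satisfiesGWARel_gens (k := k) (q := q) (d := d)).twist hqt hq0)) := by
  set ψ := GWA.lift ((GWA.satisfiesGWARel_gens (k := k) (q := q) (d := d)).twist hqt hq0)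
  set Φ := GWA.shiftRep (d := d) hq0
  have hΦψ : ∀ a, Φ (ψ a) ∈ multiplesCentralizer k ((t : ℤ) + 1) := by
    refine GWA.algHom_mem_of_gens_mem (Φ.comp ψ) ?_ ?_ ?_ ?_ <;>
      simp only [AlgHom.comp_apply, ψ, Φ, GWA.shiftRep, GWA.lift_hGen, GWA.lift_hInv,
        GWA.lift_xGen, GWA.lift_yGen, map_pow, map_mul, AlgHom.map_twistedGeomSum]
    · rw [shiftOp_pow]; exact shiftOp_mem_multiplesCentralizer ⟨1, by push_cast; ring⟩
    · rw [shiftOp_pow]; exact shiftOp_mem_multiplesCentralizer ⟨-1, by push_cast; ring⟩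
    · rw [twistedGeomSum_mul_skew (mulLeft_zpow_mul_shiftOp_one hq0), shiftOp_pow]
      exact mul_mem (mulLeft_mem_multiplesCentralizer _ _)
        (sub_mem (shiftOp_mem_multiplesCentralizer ⟨d, by push_cast; ring⟩) (one_mem _))
    · exact mulLeft_mem_multiplesCentralizer _ _
  intro hsurj
  obtain ⟨a, ha⟩ := hsurj (hGen k q d)
  refine shiftOp_one_not_mem_multiplesCentralizer (R := k) (m := t + 1) (fun h => ?_) ?_
  · have := Int.le_of_dvd one_pos h
    omega
  · simpa [ha, Φ, GWA.shiftRep] using hΦψ a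

end NotSurjective

theorem stmt11 (t : ℕ) (ht : 1 < t) (hq : IsPrimitiveRoot q t) :
    ∃ ψ : GWA k q d →ₐ[k] GWA k q d,
      ψ (hGen k q d) = hGen k q d ^ (t + 1) ∧
      ψ (hInv k q d) = hInv k q d ^ (t + 1) ∧
      ψ (xGen k q d) =
        (∑ l ∈ Finset.range (t + 1), q ^ (l * d) • hGen k q d ^ (d * l)) * xGen k q d ∧
      ψ (yGen k q d) = yGen k q d ∧
      ¬ Function.Surjective ψ := by
  have hq0 : q ≠ 0 := hq.ne_zero (by omega)
  have hR := GWA.satisfiesGWARel_gens.twist (k := k) (q := q) (d := d) hq.pow_eq_one hq0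
  exact ⟨GWA.lift hR, GWA.lift_hGen hR, GWA.lift_hInv hR, GWA.lift_xGen hR, GWA.lift_yGen hR,
    GWA.lift_twist_not_surjective (by omega) hq.pow_eq_one hq0⟩
end

section
/- Let k be a field, q ∈ k*, d, t ≥ 1. The Hayashi-type algebra H generated by Ω^{±1}, Ψ, Ψ† with ΨΩ = qΩΨ, Ψ†Ω = q^{-1}ΩΨ†, ΨΨ† = (q^tΩ^t − q^{-t}Ω^{-t})/(q^t − q^{-t}), Ψ†Ψ = (Ω^t − Ω^{-t})/(q^t − q^{-t}) (assuming q^{2t} ≠ 1) is isomorphic as k-algebra to the generalized Weyl algebra k[h^{±1}](σ, c(h^{2t} − 1)h^{-t}) for a suitable scalar c, via Ω ↦ h, Ψ ↦ x, Ψ† ↦ y; in particular H ≅ A(2t, q) in the notation where A(d,q) = k[h^{±1}](σ, h^d − 1) up to unit rescaling of the defining element. -/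
/-!
Write `c = (q^t − q^{-t})⁻¹`. Because `Ω` is invertible, `Ω^{2t} Ω^{-t} = Ω^t`, so the defining
relations `yx = c (h^{2t} − 1) h^{-t}` and `xy = c q^{-t} (q^{2t} h^{2t} − 1) h^{-t}` of the
generalized Weyl algebra become `Ψ†Ψ = c (Ω^t − Ω^{-t})` and
`ΨΨ† = c (q^t Ω^t − q^{-t} Ω^{-t})`; the remaining relations coincide. Each presentation's
relations therefore hold in the other quotient, and the identity on generators induces mutually
inverse algebra maps.
-/

/-- Relations of the Hayashi-type algebra `H` with generators `Ω = ι 0`,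
`Ω⁻¹ = ι 1`, `Ψ = ι 2`, `Ψ† = ι 3`:
`ΨΩ = qΩΨ`, `Ψ†Ω = q⁻¹ΩΨ†`,
`ΨΨ† = (q^t Ω^t − q^{-t} Ω^{-t})/(q^t − q^{-t})`,
`Ψ†Ψ = (Ω^t − Ω^{-t})/(q^t − q^{-t})`. -/
inductive HayashiRel (k : Type*) [Field k] (q : k) (t : ℕ) :
    FreeAlgebra k (Fin 4) → FreeAlgebra k (Fin 4) → Prop
  | oo : HayashiRel k q t (FreeAlgebra.ι k 0 * FreeAlgebra.ι k 1) 1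
  | oo' : HayashiRel k q t (FreeAlgebra.ι k 1 * FreeAlgebra.ι k 0) 1
  | po : HayashiRel k q t (FreeAlgebra.ι k 2 * FreeAlgebra.ι k 0)
      (q • (FreeAlgebra.ι k 0 * FreeAlgebra.ι k 2))
  | do' : HayashiRel k q t (FreeAlgebra.ι k 3 * FreeAlgebra.ι k 0)
      (q⁻¹ • (FreeAlgebra.ι k 0 * FreeAlgebra.ι k 3))
  | pd : HayashiRel k q t (FreeAlgebra.ι k 2 * FreeAlgebra.ι k 3)
      ((q ^ t - (q ^ (-(t : ℤ)) : k))⁻¹ •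
        (q ^ t • FreeAlgebra.ι k 0 ^ t - (q ^ (-(t : ℤ)) : k) • FreeAlgebra.ι k 1 ^ t))
  | dp : HayashiRel k q t (FreeAlgebra.ι k 3 * FreeAlgebra.ι k 2)
      ((q ^ t - (q ^ (-(t : ℤ)) : k))⁻¹ •
        (FreeAlgebra.ι k 0 ^ t - FreeAlgebra.ι k 1 ^ t))

/-- The Hayashi-type algebra `H`. -/
abbrev Hayashi (k : Type*) [Field k] (q : k) (t : ℕ) := RingQuot (HayashiRel k q t)

/-- Relations of the generalized Weyl algebra `k[h^{±1}](σ, a)` with `σ(h) = qh`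
and `a = c (h^{2t} − 1) h^{-t}`, `c = (q^t − q^{-t})⁻¹`: generators `h = ι 0`,
`h⁻¹ = ι 1`, `x = ι 2`, `y = ι 3`; the relations `xy = σ(a)`, `yx = a` read
`xy = c q^{-t} ((q^{2t} h^{2t} − 1) h^{-t})`, `yx = c ((h^{2t} − 1) h^{-t})`. -/
inductive GWARel' (k : Type*) [Field k] (q : k) (t : ℕ) :
    FreeAlgebra k (Fin 4) → FreeAlgebra k (Fin 4) → Prop
  | hh : GWARel' k q t (FreeAlgebra.ι k 0 * FreeAlgebra.ι k 1) 1
  | hh' : GWARel' k q t (FreeAlgebra.ι k 1 * FreeAlgebra.ι k 0) 1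
  | xh : GWARel' k q t (FreeAlgebra.ι k 2 * FreeAlgebra.ι k 0)
      (q • (FreeAlgebra.ι k 0 * FreeAlgebra.ι k 2))
  | yh : GWARel' k q t (FreeAlgebra.ι k 3 * FreeAlgebra.ι k 0)
      (q⁻¹ • (FreeAlgebra.ι k 0 * FreeAlgebra.ι k 3))
  | xy : GWARel' k q t (FreeAlgebra.ι k 2 * FreeAlgebra.ι k 3)
      (((q ^ t - (q ^ (-(t : ℤ)) : k))⁻¹ * (q ^ (-(t : ℤ)) : k)) •
        ((q ^ (2 * t) • FreeAlgebra.ι k 0 ^ (2 * t) - 1) * FreeAlgebra.ι k 1 ^ t))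
  | yx : GWARel' k q t (FreeAlgebra.ι k 3 * FreeAlgebra.ι k 2)
      ((q ^ t - (q ^ (-(t : ℤ)) : k))⁻¹ •
        ((FreeAlgebra.ι k 0 ^ (2 * t) - 1) * FreeAlgebra.ι k 1 ^ t))

/-- The generalized Weyl algebra `k[h^{±1}](σ, c (h^{2t} − 1) h^{-t})`. -/
abbrev GWA' (k : Type*) [Field k] (q : k) (t : ℕ) := RingQuot (GWARel' k q t)

namespace RingQuot

variable {R A : Type*} [CommSemiring R] [Semiring A] [Algebra R A] {r s : A → A → Prop}

def algEquivOfRel (hrs : ∀ ⦃a b⦄, r a b → mkAlgHom R s a = mkAlgHom R s b)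
    (hsr : ∀ ⦃a b⦄, s a b → mkAlgHom R r a = mkAlgHom R r b) : RingQuot r ≃ₐ[R] RingQuot s :=
  AlgEquiv.ofAlgHom (liftAlgHom R ⟨mkAlgHom R s, hrs⟩) (liftAlgHom R ⟨mkAlgHom R r, hsr⟩)
    (ringQuot_ext' R _ _ <| AlgHom.ext fun _ => by simp [liftAlgHom_mkAlgHom_apply])
    (ringQuot_ext' R _ _ <| AlgHom.ext fun _ => by simp [liftAlgHom_mkAlgHom_apply])

@[simp]
theorem algEquivOfRel_mkAlgHom (hrs : ∀ ⦃a b⦄, r a b → mkAlgHom R s a = mkAlgHom R s b)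
    (hsr : ∀ ⦃a b⦄, s a b → mkAlgHom R r a = mkAlgHom R r b) (x : A) :
    algEquivOfRel hrs hsr (mkAlgHom R r x) = mkAlgHom R s x :=
  liftAlgHom_mkAlgHom_apply R _ hrs x

end RingQuot

theorem pow_two_mul_mul_pow_of_mul_eq_one {M : Type*} [Monoid M] {u v : M} (huv : u * v = 1)
    (n : ℕ) : u ^ (2 * n) * v ^ n = u ^ n := by
  rw [two_mul, pow_add, mul_assoc, pow_mul_pow_eq_one n huv, mul_one]

section LaurentIdentities

variable {k A : Type*} [Field k] [Ring A] [Algebra k A] {u v : A}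

theorem pow_two_mul_sub_one_mul_pow (huv : u * v = 1) (n : ℕ) :
    (u ^ (2 * n) - 1) * v ^ n = u ^ n - v ^ n := by
  rw [sub_mul, one_mul, pow_two_mul_mul_pow_of_mul_eq_one huv]

theorem smul_pow_two_mul_sub_one_mul_pow (huv : u * v = 1) (q c : k) (n : ℕ) :
    (c * q ^ (-(n : ℤ))) • ((q ^ (2 * n) • u ^ (2 * n) - 1) * v ^ n)
      = c • (q ^ n • u ^ n - q ^ (-(n : ℤ)) • v ^ n) := by
  have hq : q ^ (-(n : ℤ)) * q ^ (2 * n) = q ^ n := by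
    rw [zpow_neg, zpow_natCast, two_mul, pow_add, ← mul_assoc, inv_mul_mul_self]
  rw [sub_mul, one_mul, smul_mul_assoc, pow_two_mul_mul_pow_of_mul_eq_one huv, smul_sub,
    smul_smul, mul_assoc, hq, mul_smul, mul_smul, smul_sub]

end LaurentIdentities

theorem respects_hayashiRel_iff_respects_gwaRel' {k A : Type*} [Field k] [Ring A] [Algebra k A]
    (q : k) (t : ℕ) (φ : FreeAlgebra k (Fin 4) →ₐ[k] A)
    (hφ : φ (FreeAlgebra.ι k 0) * φ (FreeAlgebra.ι k 1) = 1) :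
    (∀ ⦃a b⦄, HayashiRel k q t a b → φ a = φ b) ↔ (∀ ⦃a b⦄, GWARel' k q t a b → φ a = φ b) := by
  constructor
  · intro h a b hab
    cases hab with
    | hh => exact h .oo
    | hh' => exact h .oo'
    | xh => exact h .po
    | yh => exact h .do'
    | xy =>
      rw [h .pd]
      simp only [map_smul, map_sub, map_mul, map_pow, map_one]
      exact (smul_pow_two_mul_sub_one_mul_pow hφ q _ t).symm
    | yx =>
      rw [h .dp]
      simp only [map_smul, map_sub, map_mul, map_pow, map_one, pow_two_mul_sub_one_mul_pow hφ]
  · intro h a b hab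
    cases hab with
    | oo => exact h .hh
    | oo' => exact h .hh'
    | po => exact h .xh
    | do' => exact h .yh
    | pd =>
      rw [h .xy]
      simp only [map_smul, map_sub, map_mul, map_pow, map_one]
      exact smul_pow_two_mul_sub_one_mul_pow hφ q _ t
    | dp =>
      rw [h .yx]
      simp only [map_smul, map_sub, map_mul, map_pow, map_one, pow_two_mul_sub_one_mul_pow hφ]

theorem stmt17_general (k : Type*) [Field k] (q : k) (t : ℕ) :
    ∃ e : Hayashi k q t ≃ₐ[k] GWA' k q t,
      e (RingQuot.mkAlgHom k (HayashiRel k q t) (FreeAlgebra.ι k 0))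
        = RingQuot.mkAlgHom k (GWARel' k q t) (FreeAlgebra.ι k 0) ∧
      e (RingQuot.mkAlgHom k (HayashiRel k q t) (FreeAlgebra.ι k 1))
        = RingQuot.mkAlgHom k (GWARel' k q t) (FreeAlgebra.ι k 1) ∧
      e (RingQuot.mkAlgHom k (HayashiRel k q t) (FreeAlgebra.ι k 2))
        = RingQuot.mkAlgHom k (GWARel' k q t) (FreeAlgebra.ι k 2) ∧
      e (RingQuot.mkAlgHom k (HayashiRel k q t) (FreeAlgebra.ι k 3))
        = RingQuot.mkAlgHom k (GWARel' k q t) (FreeAlgebra.ι k 3) := by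
  have hayashi_iff := respects_hayashiRel_iff_respects_gwaRel' q t (RingQuot.mkAlgHom k (HayashiRel k q t))
    (by rw [← map_mul, RingQuot.mkAlgHom_rel k .oo, map_one])
  have gwa_iff := respects_hayashiRel_iff_respects_gwaRel' q t (RingQuot.mkAlgHom k (GWARel' k q t))
    (by rw [← map_mul, RingQuot.mkAlgHom_rel k .hh, map_one])
  exact ⟨RingQuot.algEquivOfRel (gwa_iff.mpr fun _ _ => RingQuot.mkAlgHom_rel k)
    (hayashi_iff.mp fun _ _ => RingQuot.mkAlgHom_rel k), by simp, by simp, by simp, by simp⟩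

/-- for `q ∈ k*` with `q^{2t} ≠ 1`, the Hayashi-type algebra is
isomorphic to the generalized Weyl algebra `k[h^{±1}](σ, c (h^{2t} − 1) h^{-t})`
via `Ω ↦ h`, `Ψ ↦ x`, `Ψ† ↦ y`. -/
theorem stmt17 (k : Type*) [Field k] (q : k) (t : ℕ) (ht : 1 ≤ t)
    (hq0 : q ≠ 0) (hq : q ^ (2 * t) ≠ 1) :
    ∃ e : Hayashi k q t ≃ₐ[k] GWA' k q t,
      e (RingQuot.mkAlgHom k (HayashiRel k q t) (FreeAlgebra.ι k 0))
        = RingQuot.mkAlgHom k (GWARel' k q t) (FreeAlgebra.ι k 0) ∧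
      e (RingQuot.mkAlgHom k (HayashiRel k q t) (FreeAlgebra.ι k 1))
        = RingQuot.mkAlgHom k (GWARel' k q t) (FreeAlgebra.ι k 1) ∧
      e (RingQuot.mkAlgHom k (HayashiRel k q t) (FreeAlgebra.ι k 2))
        = RingQuot.mkAlgHom k (GWARel' k q t) (FreeAlgebra.ι k 2) ∧
      e (RingQuot.mkAlgHom k (HayashiRel k q t) (FreeAlgebra.ι k 3))
        = RingQuot.mkAlgHom k (GWARel' k q t) (FreeAlgebra.ι k 3) :=
  stmt17_general k q t
end
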